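/- There is a constant C such that for all T > 0: ∑_{k ∈ (2πℤ)², k ≠ 0} exp(-T · d(k,0)³) · d(k,0)^(-1) ≤ C · T^(-1/2), where d(k,0) = |k1| + |k2|^(2/3). -/

import Mathlib

/-!
For `m = (a, b) ≠ 0` write `d = x + y` with `x = |2πa|` and `y = |2πb|^(2/3)`. Then `d ≥ 1` and
`d³ ≥ x³ + y³ = |2πa|³ + (2πb)²`, so splitting `T d³` into two halves gives
`e^{-T d³} / d ≤ e^{-T/2} · e^{-(T/2) x³} · e^{-(T/2) y³} / max(1, y)`, a product of a function of
`a` and a function of `b` (the `max` keeps the row `b = 0` covered). Comparing each sum over `ℤ`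
with a Gamma integral bounds the `a`-sum by `1 + O(T^(-1/3))` and the `b`-sum by
`1 + O(T^(-1/6))`. The factor `e^{-T/2}` absorbs the constant terms, and
`T^(-1/3) · T^(-1/6) = T^(-1/2)`.
-/

open Real

/-- The anisotropic distance to the origin of a lattice point `k = 2πm ∈ (2πℤ)²`:
`d(k,0) = |k₁| + |k₂|^(2/3)`. -/
noncomputable def latticeDist (m : ℤ × ℤ) : ℝ :=
  |2 * π * (m.1 : ℝ)| + |2 * π * (m.2 : ℝ)| ^ ((2 : ℝ) / 3)

open Set MeasureTheory

-- Unlike `AntitoneOn.sum_le_integral`, this allows `f` to blow up at `0`, like `x ^ (-2 / 3)`.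
theorem sum_range_le_integral_Ioi_of_antitoneOn {f : ℝ → ℝ} (hf : AntitoneOn f (Ioi 0))
    (hf0 : ∀ x ∈ Ioi (0 : ℝ), 0 ≤ f x) (hfi : IntegrableOn f (Ioi 0)) (N : ℕ) :
    ∑ n ∈ Finset.range N, f (n + 1) ≤ ∫ x in Ioi 0, f x := by
  have hint {a b : ℝ} (ha : 0 ≤ a) (hab : a ≤ b) : IntervalIntegrable f volume a b :=
    (intervalIntegrable_iff_integrableOn_Ioc_of_le hab).2 <|
      hfi.mono_set (Ioc_subset_Ioi_self.trans (Ioi_subset_Ioi ha))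
  have hpiece (n : ℕ) : f (n + 1) ≤ ∫ x in (n : ℝ)..(n + 1 : ℕ), f x := by
    have hle : (n : ℝ) ≤ (n + 1 : ℕ) := by push_cast; linarith
    calc f (n + 1) = ∫ _ in (n : ℝ)..(n + 1 : ℕ), f (n + 1) := by simp
      _ ≤ ∫ x in (n : ℝ)..(n + 1 : ℕ), f x :=
        intervalIntegral.integral_mono_on_of_le_Ioo hle intervalIntegrable_const
          (hint n.cast_nonneg hle) fun x hx => hf (n.cast_nonneg.trans_lt hx.1)
            (mem_Ioi.2 n.cast_add_one_pos) (by push_cast at hx; exact hx.2.le)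
  calc ∑ n ∈ Finset.range N, f (n + 1)
      ≤ ∑ n ∈ Finset.range N, ∫ x in (n : ℝ)..(n + 1 : ℕ), f x :=
        Finset.sum_le_sum fun n _ => hpiece n
    _ = ∫ x in (0 : ℝ)..N, f x := by
      rw [intervalIntegral.sum_integral_adjacent_intervals fun k _ =>
        hint k.cast_nonneg (by push_cast; linarith)]
      simp
    _ = ∫ x in Ioc 0 (N : ℝ), f x := intervalIntegral.integral_of_le N.cast_nonneg
    _ ≤ ∫ x in Ioi 0, f x :=
      setIntegral_mono_set hfi ((ae_restrict_iff' measurableSet_Ioi).2 (.of_forall hf0))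
        Ioc_subset_Ioi_self.eventuallyLE

theorem summable_and_tsum_int_comp_abs_mul_le {φ g : ℝ → ℝ} {c : ℝ} (hc : 0 < c)
    (hφ0 : ∀ x, 0 ≤ φ x) (hφg : ∀ x ∈ Ioi (0 : ℝ), φ x ≤ g x) (hg : AntitoneOn g (Ioi 0))
    (hgi : IntegrableOn g (Ioi 0)) :
    Summable (fun a : ℤ => φ |c * a|) ∧
      ∑' a : ℤ, φ |c * a| ≤ φ 0 + 2 * (c⁻¹ * ∫ x in Ioi 0, g x) := by
  have hcx {x : ℝ} (hx : x ∈ Ioi (0 : ℝ)) : c * x ∈ Ioi 0 := mul_pos hc hx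
  have hgc_anti : AntitoneOn (fun x => g (c * x)) (Ioi 0) := fun x hx y hy hxy =>
    hg (hcx hx) (hcx hy) (mul_le_mul_of_nonneg_left hxy hc.le)
  have hgc_nonneg : ∀ x ∈ Ioi (0 : ℝ), 0 ≤ g (c * x) := fun x hx => (hφ0 _).trans (hφg _ (hcx hx))
  have hgc_int : IntegrableOn (fun x => g (c * x)) (Ioi 0) := by
    rwa [integrableOn_Ioi_comp_mul_left_iff g 0 hc, mul_zero]
  have hsum_le (N : ℕ) : ∑ n ∈ Finset.range N, g (c * (n + 1)) ≤ c⁻¹ * ∫ x in Ioi 0, g x := by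
    rw [← smul_eq_mul, ← mul_zero c, ← integral_comp_mul_left_Ioi g 0 hc]
    exact sum_range_le_integral_Ioi_of_antitoneOn hgc_anti hgc_nonneg hgc_int N
  have hgc_summable : Summable fun n : ℕ => g (c * (n + 1)) :=
    summable_of_sum_range_le (fun n => hgc_nonneg _ (mem_Ioi.2 n.cast_add_one_pos)) hsum_le
  have hterm (n : ℕ) : φ |c * ((n + 1 : ℤ) : ℝ)| ≤ g (c * (n + 1)) := by
    rw [abs_of_pos (by push_cast; positivity)]
    push_cast
    exact hφg _ (mul_pos hc n.cast_add_one_pos)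
  have hterm' (n : ℕ) : φ |c * ((-(n + 1) : ℤ) : ℝ)| ≤ g (c * (n + 1)) := by
    rw [Int.cast_neg, mul_neg, abs_neg]
    exact hterm n
  have s₁ : Summable fun n : ℕ => φ |c * ((n + 1 : ℤ) : ℝ)| :=
    hgc_summable.of_nonneg_of_le (fun _ => hφ0 _) hterm
  have s₂ : Summable fun n : ℕ => φ |c * ((-(n + 1) : ℤ) : ℝ)| :=
    hgc_summable.of_nonneg_of_le (fun _ => hφ0 _) hterm'
  have hgsum : ∑' n : ℕ, g (c * (n + 1)) ≤ c⁻¹ * ∫ x in Ioi 0, g x :=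
    Real.tsum_le_of_sum_range_le (fun n => hgc_nonneg _ (mem_Ioi.2 n.cast_add_one_pos)) hsum_le
  refine ⟨.of_add_one_of_neg_add_one (f := fun a : ℤ => φ |c * a|) s₁ s₂, ?_⟩
  rw [tsum_of_add_one_of_neg_add_one (f := fun a : ℤ => φ |c * a|) s₁ s₂]
  have e₁ := s₁.tsum_le_tsum hterm hgc_summable
  have e₂ := s₂.tsum_le_tsum hterm' hgc_summable
  simp only [Int.cast_zero, mul_zero, abs_zero]
  linarith

noncomputable def latticeFactor₁ (t : ℝ) (a : ℤ) : ℝ :=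
  exp (-t * |2 * π * a| ^ 3)

noncomputable def latticeFactor₂ (t : ℝ) (b : ℤ) : ℝ :=
  exp (-t * (|2 * π * b| ^ (2 / 3 : ℝ)) ^ 3) * (max 1 (|2 * π * b| ^ (2 / 3 : ℝ)))⁻¹

theorem latticeFactor₁_nonneg (t : ℝ) (a : ℤ) : 0 ≤ latticeFactor₁ t a :=
  (exp_pos _).le

theorem latticeFactor₂_nonneg (t : ℝ) (b : ℤ) : 0 ≤ latticeFactor₂ t b := by
  unfold latticeFactor₂; positivity

theorem summable_and_tsum_latticeFactor₁_le {t : ℝ} (ht : 0 < t) :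
    Summable (latticeFactor₁ t) ∧
      ∑' a, latticeFactor₁ t a ≤ 1 + π⁻¹ * Gamma (4 / 3) * t ^ (-1 / 3 : ℝ) := by
  have hint : IntegrableOn (fun x : ℝ => exp (-t * x ^ (3 : ℝ))) (Ioi 0) := by
    simpa using integrableOn_rpow_mul_exp_neg_mul_rpow (s := 0) (p := 3) (by norm_num)
      (by norm_num) ht
  have h := summable_and_tsum_int_comp_abs_mul_le (φ := fun x => exp (-t * x ^ 3))
    (g := fun x => exp (-t * x ^ (3 : ℝ))) (c := 2 * π) (by positivity) (fun _ => (exp_pos _).le)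
    (fun x _ => by norm_cast)
    (fun x hx y _ hxy => exp_le_exp.2 <| by
      have := rpow_le_rpow (le_of_lt hx) hxy (by norm_num : (0 : ℝ) ≤ 3)
      nlinarith)
    hint
  rw [integral_exp_neg_mul_rpow (by norm_num) ht] at h
  refine ⟨h.1, h.2.trans_eq ?_⟩
  norm_num
  ring

theorem summable_and_tsum_latticeFactor₂_le {t : ℝ} (ht : 0 < t) :
    Summable (latticeFactor₂ t) ∧
      ∑' b, latticeFactor₂ t b ≤ 1 + (2 * π)⁻¹ * Gamma (1 / 6) * t ^ (-1 / 6 : ℝ) := by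
  have hφg : ∀ x ∈ Ioi (0 : ℝ), exp (-t * (x ^ (2 / 3 : ℝ)) ^ 3) * (max 1 (x ^ (2 / 3 : ℝ)))⁻¹
      ≤ x ^ (-2 / 3 : ℝ) * exp (-t * x ^ (2 : ℝ)) := by
    intro x hx
    have hx : 0 < x := hx
    have hcube : (x ^ (2 / 3 : ℝ)) ^ 3 = x ^ (2 : ℝ) := by
      rw [← rpow_natCast, ← rpow_mul hx.le]; norm_num
    have hinv : (max 1 (x ^ (2 / 3 : ℝ)))⁻¹ ≤ x ^ (-2 / 3 : ℝ) := by
      rw [show (-2 / 3 : ℝ) = -(2 / 3) by norm_num, rpow_neg hx.le]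
      exact inv_anti₀ (by positivity) (le_max_right _ _)
    rw [hcube, mul_comm]
    exact mul_le_mul_of_nonneg_right hinv (exp_pos _).le
  have hanti : AntitoneOn (fun x : ℝ => x ^ (-2 / 3 : ℝ) * exp (-t * x ^ (2 : ℝ))) (Ioi 0) := by
    intro x hx y _ hxy
    have hx : 0 < x := hx
    refine mul_le_mul (rpow_le_rpow_of_nonpos hx hxy (by norm_num)) (exp_le_exp.2 ?_)
      (exp_pos _).le (by positivity)
    have := rpow_le_rpow hx.le hxy (by norm_num : (0 : ℝ) ≤ 2)
    nlinarith
  have h := summable_and_tsum_int_comp_abs_mul_le (c := 2 * π) (by positivity)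
    (fun _ => by positivity) hφg hanti
    (integrableOn_rpow_mul_exp_neg_mul_rpow (by norm_num) (by norm_num) ht)
  rw [integral_rpow_mul_exp_neg_mul_rpow (by norm_num) (by norm_num) ht] at h
  refine ⟨h.1, h.2.trans_eq ?_⟩
  norm_num
  ring

theorem one_le_abs_two_pi_mul_intCast {a : ℤ} (ha : a ≠ 0) : 1 ≤ |2 * π * (a : ℝ)| := by
  have h1 : (1 : ℝ) ≤ |(a : ℝ)| := by exact_mod_cast Int.one_le_abs ha
  rw [abs_mul, abs_of_pos (by positivity : (0 : ℝ) < 2 * π)]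
  nlinarith [pi_gt_three]

theorem one_le_latticeDist {m : ℤ × ℤ} (hm : m ≠ 0) : 1 ≤ latticeDist m := by
  obtain ⟨a, b⟩ := m
  have hx : 0 ≤ |2 * π * (a : ℝ)| := abs_nonneg _
  have hy : 0 ≤ |2 * π * (b : ℝ)| ^ ((2 : ℝ) / 3) := by positivity
  unfold latticeDist
  by_cases ha : a = 0
  · have hb : b ≠ 0 := by rintro rfl; exact hm (by rw [ha]; rfl)
    have := one_le_rpow (one_le_abs_two_pi_mul_intCast hb) (by norm_num : (0 : ℝ) ≤ 2 / 3)
    linarith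
  · linarith [one_le_abs_two_pi_mul_intCast ha]

theorem exp_neg_mul_latticeDist_pow_three_mul_inv_le {m : ℤ × ℤ} (hm : m ≠ 0) {T : ℝ}
    (hT : 0 ≤ T) :
    exp (-T * latticeDist m ^ 3) * (latticeDist m)⁻¹ ≤
      exp (-(T / 2)) * (latticeFactor₁ (T / 2) m.1 * latticeFactor₂ (T / 2) m.2) := by
  set x := |2 * π * (m.1 : ℝ)|
  set y := |2 * π * (m.2 : ℝ)| ^ (2 / 3 : ℝ)
  have hd : latticeDist m = x + y := rfl
  have hx : 0 ≤ x := abs_nonneg _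
  have hy : 0 ≤ y := by positivity
  have hd1 := one_le_latticeDist hm
  have hcube : x ^ 3 + y ^ 3 ≤ latticeDist m ^ 3 := by
    rw [hd]; nlinarith [mul_nonneg (mul_nonneg hx hy) (add_nonneg hx hy)]
  have hexp : exp (-T * latticeDist m ^ 3) ≤
      exp (-(T / 2)) * (exp (-(T / 2) * x ^ 3) * exp (-(T / 2) * y ^ 3)) := by
    rw [← exp_add, ← exp_add]
    refine exp_le_exp.2 ?_
    nlinarith [one_le_pow₀ (n := 3) hd1]
  have hinv : (latticeDist m)⁻¹ ≤ (max 1 y)⁻¹ :=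
    inv_anti₀ (by positivity) (max_le hd1 (by rw [hd]; linarith))
  calc exp (-T * latticeDist m ^ 3) * (latticeDist m)⁻¹
      ≤ exp (-(T / 2)) * (exp (-(T / 2) * x ^ 3) * exp (-(T / 2) * y ^ 3)) * (max 1 y)⁻¹ :=
        mul_le_mul hexp hinv (by positivity) (by positivity)
    _ = _ := by unfold latticeFactor₁ latticeFactor₂; ring

theorem exp_neg_mul_rpow_neg_le {t r : ℝ} (ht : 0 < t) (hr₀ : 0 ≤ r) (hr : r ≤ 1 / 2) :
    exp (-t) * t ^ (-r) ≤ t ^ (-1 / 2 : ℝ) := by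
  have hsplit : t ^ (-r) = t ^ (1 / 2 - r) * t ^ (-1 / 2 : ℝ) := by
    rw [← rpow_add ht]; ring_nf
  have hle : t ^ (1 / 2 - r) ≤ exp t := by
    rw [rpow_def_of_pos ht]
    refine exp_le_exp.2 ?_
    have := log_le_sub_one_of_pos ht
    rcases le_total (log t) 0 with h | h <;> nlinarith
  rw [hsplit, ← mul_assoc]
  calc exp (-t) * t ^ (1 / 2 - r) * t ^ (-1 / 2 : ℝ)
      ≤ exp (-t) * exp t * t ^ (-1 / 2 : ℝ) := by gcongr
    _ = t ^ (-1 / 2 : ℝ) := by rw [← exp_add, neg_add_cancel, exp_zero, one_mul]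

theorem exp_neg_mul_one_add_mul_one_add_le {t A B : ℝ} (ht : 0 < t) (hA : 0 ≤ A) (hB : 0 ≤ B) :
    exp (-t) * ((1 + A * t ^ (-1 / 3 : ℝ)) * (1 + B * t ^ (-1 / 6 : ℝ))) ≤
      (1 + A) * (1 + B) * t ^ (-1 / 2 : ℝ) := by
  have hprod : t ^ (-1 / 3 : ℝ) * t ^ (-1 / 6 : ℝ) = t ^ (-(1 / 2) : ℝ) := by
    rw [← rpow_add ht]; norm_num
  have h₀ := exp_neg_mul_rpow_neg_le ht le_rfl (by norm_num : (0 : ℝ) ≤ 1 / 2)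
  have h₁ := exp_neg_mul_rpow_neg_le ht (by norm_num : (0 : ℝ) ≤ 1 / 3) (by norm_num)
  have h₂ := exp_neg_mul_rpow_neg_le ht (by norm_num : (0 : ℝ) ≤ 1 / 6) (by norm_num)
  have h₃ := exp_neg_mul_rpow_neg_le ht (by norm_num : (0 : ℝ) ≤ 1 / 2) le_rfl
  rw [neg_zero, rpow_zero, mul_one] at h₀
  have e : exp (-t) * ((1 + A * t ^ (-1 / 3 : ℝ)) * (1 + B * t ^ (-1 / 6 : ℝ))) =
      exp (-t) + A * (exp (-t) * t ^ (-(1 / 3) : ℝ)) + B * (exp (-t) * t ^ (-(1 / 6) : ℝ)) +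
        A * B * (exp (-t) * t ^ (-(1 / 2) : ℝ)) := by
    rw [← hprod]; ring_nf
  rw [e]
  nlinarith [mul_le_mul_of_nonneg_left h₁ hA, mul_le_mul_of_nonneg_left h₂ hB,
    mul_le_mul_of_nonneg_left h₃ (mul_nonneg hA hB)]

/-- Weighted heat-kernel sum bound with weight 1/d(k,0), bounded by C T^(-1/2). -/
theorem lattice_exp_sum_bound_inv :
    ∃ C : ℝ, 0 < C ∧ ∀ T : ℝ, 0 < T →
      Summable (fun m : {m : ℤ × ℤ // m ≠ 0} =>
        Real.exp (-T * latticeDist m ^ 3) * (latticeDist m)⁻¹) ∧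
      (∑' m : {m : ℤ × ℤ // m ≠ 0},
          Real.exp (-T * latticeDist m ^ 3) * (latticeDist m)⁻¹)
        ≤ C * T ^ (-(1 : ℝ) / 2) := by
  set A := π⁻¹ * Gamma (4 / 3)
  set B := (2 * π)⁻¹ * Gamma (1 / 6)
  have hA : 0 ≤ A := by positivity
  have hB : 0 ≤ B := by positivity
  refine ⟨(1 + A) * (1 + B) / 2 ^ (-1 / 2 : ℝ), by positivity, fun T hT => ?_⟩
  have ht : 0 < T / 2 := by positivity
  obtain ⟨hu, hU⟩ := summable_and_tsum_latticeFactor₁_le ht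
  obtain ⟨hv, hV⟩ := summable_and_tsum_latticeFactor₂_le ht
  have huv := hu.mul_of_nonneg hv (latticeFactor₁_nonneg _) (latticeFactor₂_nonneg _)
  have hmaj := (huv.mul_left (exp (-(T / 2)))).subtype {m | m ≠ 0}
  have hle (m : {m : ℤ × ℤ // m ≠ 0}) := exp_neg_mul_latticeDist_pow_three_mul_inv_le m.2 hT.le
  have hF : Summable (fun m : {m : ℤ × ℤ // m ≠ 0} =>
      exp (-T * latticeDist m ^ 3) * (latticeDist m)⁻¹) :=
    hmaj.of_nonneg_of_le (fun m => mul_nonneg (exp_pos _).le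
      (inv_nonneg.2 (zero_le_one.trans (one_le_latticeDist m.2)))) hle
  refine ⟨hF, ?_⟩
  have hprod_nonneg (p : ℤ × ℤ) :=
    mul_nonneg (exp_pos (-(T / 2))).le
      (mul_nonneg (latticeFactor₁_nonneg (T / 2) p.1) (latticeFactor₂_nonneg (T / 2) p.2))
  calc ∑' m : {m : ℤ × ℤ // m ≠ 0}, exp (-T * latticeDist m ^ 3) * (latticeDist m)⁻¹
      ≤ ∑' m : {m : ℤ × ℤ // m ≠ 0},
          exp (-(T / 2)) * (latticeFactor₁ (T / 2) m.1.1 * latticeFactor₂ (T / 2) m.1.2) :=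
        hF.tsum_le_tsum hle hmaj
    _ ≤ ∑' p : ℤ × ℤ, exp (-(T / 2)) * (latticeFactor₁ (T / 2) p.1 * latticeFactor₂ (T / 2) p.2) :=
        (huv.mul_left _).tsum_subtype_le _ _ hprod_nonneg
    _ = exp (-(T / 2)) *
          ((∑' a, latticeFactor₁ (T / 2) a) * ∑' b, latticeFactor₂ (T / 2) b) := by
      rw [tsum_mul_left, hu.tsum_mul_tsum hv huv]
    _ ≤ exp (-(T / 2)) * ((1 + A * (T / 2) ^ (-1 / 3 : ℝ)) * (1 + B * (T / 2) ^ (-1 / 6 : ℝ))) := by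
      gcongr
      exact tsum_nonneg (latticeFactor₂_nonneg _)
    _ ≤ (1 + A) * (1 + B) * (T / 2) ^ (-1 / 2 : ℝ) := exp_neg_mul_one_add_mul_one_add_le ht hA hB
    _ = (1 + A) * (1 + B) / 2 ^ (-1 / 2 : ℝ) * T ^ (-(1 : ℝ) / 2) := by
      rw [div_rpow hT.le zero_le_two]; ring
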